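/- arXiv:math/0108215 — 5 statements merged into one kernel-verified Lean document; each statement's English description precedes it below -/
import Mathlib

section
/- For a fixed point s on a circle C of radius R > 0 in the plane, the integral over t ∈ C of (1/|s-t|² − 1/arc(s,t)²) equals 2/(πR), where arc(s,t) denotes the shorter arclength along the circle between s and t. -/
open Real MeasureTheory Set Filter

lemma cot_lim : Filter.Tendsto (fun u : ℝ => 1/u - Real.cos u / Real.sin u)
    (nhdsWithin 0 (Set.Ioi 0)) (nhds 0) := by
  have hid : Filter.Tendsto (fun u : ℝ => u) (nhdsWithin 0 (Set.Ioi 0)) (nhds (0:ℝ)) :=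
    Filter.tendsto_id.mono_left nhdsWithin_le_nhds
  apply tendsto_of_tendsto_of_tendsto_of_le_of_le' tendsto_const_nhds hid
  · filter_upwards [Ioc_mem_nhdsGT (by norm_num : (0:ℝ) < 1)] with u hu
    have hu0 : 0 < u := hu.1
    have hu1 : u ≤ 1 := hu.2
    have hup : u < π/2 := lt_of_le_of_lt hu1 (by linarith [Real.pi_gt_three])
    have hs : 0 < Real.sin u := Real.sin_pos_of_pos_of_lt_pi hu0 (by linarith [Real.pi_gt_three])
    have hcpos : 0 < Real.cos u := Real.cos_pos_of_mem_Ioo ⟨by linarith, hup⟩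
    have htan := Real.lt_tan hu0 hup
    rw [Real.tan_eq_sin_div_cos, lt_div_iff₀ hcpos] at htan
    rw [sub_nonneg, div_le_div_iff₀ hs hu0]
    nlinarith
  · filter_upwards [Ioc_mem_nhdsGT (by norm_num : (0:ℝ) < 1)] with u hu
    have hu0 : 0 < u := hu.1
    have hu1 : u ≤ 1 := hu.2
    have hs : 0 < Real.sin u := Real.sin_pos_of_pos_of_lt_pi hu0 (by linarith [Real.pi_gt_three])
    have h1 := Real.sin_gt_sub_cube hu0
    have h2 := Real.sin_le hu0.le
    have h3 : 1 - u^2/2 ≤ Real.cos u := Real.one_sub_sq_div_two_le_cos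
    rw [div_sub_div _ _ hu0.ne' hs.ne', div_le_iff₀ (by positivity)]
    have hu2 : u^2 ≤ 1 := by nlinarith
    have h5 : u^5 ≤ u^3 := by nlinarith [mul_nonneg (pow_pos hu0 3).le (sub_nonneg.2 hu2)]
    have hA : Real.sin u - u * Real.cos u ≤ u^3/2 := by
      nlinarith [mul_le_mul_of_nonneg_left h3 hu0.le]
    have hB : u^3 - u^5/4 ≤ u * (u * Real.sin u) := by
      nlinarith [mul_le_mul_of_nonneg_left h1.le (mul_pos hu0 hu0).le]
    linarith [pow_pos hu0 3]

/-- For a fixed point `s = c 0` on a circle `C` of radius `R > 0` in the plane,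
parameterized by arclength `c`, the integral over the circle of
`1/|s−t|² − 1/arc(s,t)²` equals `2/(πR)`.  Here, for `t ∈ (0, 2πR)`, the shorter
arclength from `c 0` to `c t` is `min t (2πR − t)`. -/
theorem stmt_0 (R : ℝ) (hR : 0 < R) (c : ℝ → EuclideanSpace ℝ (Fin 2))
    (hc : ∀ t, c t = ![R * Real.cos (t / R), R * Real.sin (t / R)]) :
    ∫ t in Ioo (0 : ℝ) (2 * π * R),
      (1 / dist (c 0) (c t) ^ 2 - 1 / min t (2 * π * R - t) ^ 2)
      = 2 / (π * R) := by
  have hπ := Real.pi_pos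
  set b : ℝ := 2 * π * R with hbdef
  set m : ℝ := π * R with hmdef
  have hm : 0 < m := by positivity
  have hmb : m < b := by rw [hbdef, hmdef]; nlinarith
  have hb : 0 < b := hm.trans hmb
  -- distance formula
  have hsin : ∀ t, dist (c 0) (c t) ^ 2 = 4 * R^2 * Real.sin (t/(2*R))^2 := by
    intro t
    have hhalf : Real.sin (t/(2*R))^2 = (1 - Real.cos (t/R))/2 := by
      have h2 : 2 * (t/(2*R)) = t/R := by field_simp
      rw [Real.sin_sq_eq_half_sub, h2]; ring
    rw [EuclideanSpace.dist_eq, hc 0, hc t]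
    rw [Real.sq_sqrt (by positivity)]
    simp only [Fin.sum_univ_two, Matrix.cons_val_zero, Matrix.cons_val_one, Matrix.head_cons,
      zero_div, Real.cos_zero, Real.sin_zero, mul_one, mul_zero]
    rw [hhalf]
    simp only [Real.dist_eq]
    rw [sq_abs, sq_abs]
    linear_combination (R^2) * Real.sin_sq_add_cos_sq (t/R)
  set f' : ℝ → ℝ := fun t => 1 / (4 * R^2 * Real.sin (t/(2*R))^2) - 1 / t^2 with hf'def
  set F : ℝ → ℝ := fun t => 1/t - Real.cos (t/(2*R)) / Real.sin (t/(2*R)) / (2*R) with hFdef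
  -- derivative
  have hF' : ∀ t ∈ Ioo (0:ℝ) m, HasDerivAt F (f' t) t := by
    intro t ht
    have ht0 : 0 < t := ht.1
    have htm : t < m := ht.2
    have hu0 : 0 < t/(2*R) := by positivity
    have huπ : t/(2*R) < π := by
      rw [div_lt_iff₀ (by positivity)]; rw [hmdef] at htm; nlinarith
    have hsne : Real.sin (t/(2*R)) ≠ 0 := (Real.sin_pos_of_pos_of_lt_pi hu0 huπ).ne'
    have hinner : HasDerivAt (fun t : ℝ => t/(2*R)) (1/(2*R)) t := by
      simpa using (hasDerivAt_id t).div_const (2*R)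
    have hcos : HasDerivAt (fun t : ℝ => Real.cos (t/(2*R)))
        (-Real.sin (t/(2*R)) * (1/(2*R))) t :=
      by have := (Real.hasDerivAt_cos (t/(2*R))).comp t hinner; exact this
    have hsinD : HasDerivAt (fun t : ℝ => Real.sin (t/(2*R)))
        (Real.cos (t/(2*R)) * (1/(2*R))) t :=
      by have := (Real.hasDerivAt_sin (t/(2*R))).comp t hinner; exact this
    have hinv : HasDerivAt (fun t : ℝ => 1/t) (-(1/t^2)) t := by
      simpa [one_div] using hasDerivAt_inv ht0.ne'
    have hdiv := (hcos.div hsinD hsne).div_const (2*R)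
    have := hinv.sub hdiv
    refine this.congr_deriv ?_
    symm
    have hnum : -Real.sin (t/(2*R)) * (1/(2*R)) * Real.sin (t/(2*R)) -
        Real.cos (t/(2*R)) * (Real.cos (t/(2*R)) * (1/(2*R))) = -(1/(2*R)) := by
      linear_combination (-(1/(2*R))) * Real.sin_sq_add_cos_sq (t/(2*R))
    rw [hf'def]
    rw [hnum]
    field_simp
    ring
  -- limit at 0
  have htend0 : Filter.Tendsto F (nhdsWithin 0 (Set.Ioi 0)) (nhds 0) := by
    have hmap : Filter.Tendsto (fun t : ℝ => t/(2*R)) (nhdsWithin 0 (Set.Ioi 0))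
        (nhdsWithin 0 (Set.Ioi 0)) := by
      apply tendsto_nhdsWithin_of_tendsto_nhds_of_eventually_within
      · simpa using ((continuous_id.div_const (2*R)).tendsto 0).mono_left nhdsWithin_le_nhds
      · filter_upwards [self_mem_nhdsWithin] with t ht
        exact div_pos (Set.mem_Ioi.mp ht) (by positivity)
    have := (cot_lim.comp hmap).const_mul (1/(2*R))
    rw [mul_zero] at this
    apply this.congr'
    filter_upwards [self_mem_nhdsWithin] with t ht
    have hcancel : (1:ℝ)/(2*R) * ((2*R)/t) = 1/t := by
      rw [div_mul_div_comm, one_mul, div_mul_cancel_left₀ (show (2*R) ≠ 0 by positivity), one_div]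
    simp only [Function.comp, hFdef]
    rw [one_div_div, mul_sub, hcancel]
    ring
  -- limit at m
  have htendm : Filter.Tendsto F (nhdsWithin m (Set.Iio m)) (nhds (1/(π*R))) := by
    have hm2 : m/(2*R) = π/2 := by rw [hmdef]; field_simp
    have hsne : Real.sin (m/(2*R)) ≠ 0 := by rw [hm2, Real.sin_pi_div_two]; norm_num
    have hcont : ContinuousAt F m := by
      apply ContinuousAt.sub
      · exact continuousAt_const.div continuousAt_id hm.ne'
      · exact ((Real.continuous_cos.continuousAt.comp
          (continuousAt_id.div_const (2*R))).div
          (Real.continuous_sin.continuousAt.comp (continuousAt_id.div_const (2*R))) hsne).div_const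
          (2*R)
    have hFm : F m = 1/(π*R) := by
      simp only [hFdef, hm2, Real.sin_pi_div_two, Real.cos_pi_div_two]
      rw [hmdef]; ring
    rw [← hFm]
    exact hcont.continuousWithinAt
  -- nonnegativity of f' on (0, m)
  have hnonneg : ∀ t ∈ Ioo (0:ℝ) m, 0 ≤ f' t := by
    intro t ht
    have ht0 : 0 < t := ht.1
    have hu0 : 0 < t/(2*R) := by positivity
    have huπ : t/(2*R) < π := by
      rw [div_lt_iff₀ (by positivity)]; have := ht.2; rw [hmdef] at this; nlinarith
    have hspos : 0 < Real.sin (t/(2*R)) := Real.sin_pos_of_pos_of_lt_pi hu0 huπ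
    have hsle : Real.sin (t/(2*R)) ≤ t/(2*R) := Real.sin_le hu0.le
    have hle : 4 * R^2 * Real.sin (t/(2*R))^2 ≤ t^2 := by
      have h1 : Real.sin (t/(2*R))^2 ≤ (t/(2*R))^2 := by nlinarith
      have h2 : (t/(2*R))^2 = t^2/(4*R^2) := by field_simp; ring
      rw [h2] at h1
      calc 4 * R^2 * Real.sin (t/(2*R))^2 ≤ 4 * R^2 * (t^2/(4*R^2)) := by nlinarith
        _ = t^2 := by field_simp
    have := one_div_le_one_div_of_le (by positivity) hle
    simp only [hf'def, sub_nonneg]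
    exact this
  -- continuity of F on [0, m]
  have hcontF : ContinuousOn F (Icc 0 m) := by
    intro t ht
    rcases eq_or_ne t 0 with rfl | ht0
    · have hF0 : F 0 = 0 := by simp [hFdef]
      show Filter.Tendsto F (nhdsWithin 0 (Icc 0 m)) (nhds (F 0))
      rw [hF0]
      refine Filter.Tendsto.mono_left ?_ (nhdsWithin_mono _ Icc_subset_Ici_self)
      rw [← Ioi_insert, nhdsWithin_insert, Filter.tendsto_sup]
      exact ⟨by simpa [hF0] using tendsto_pure_nhds F 0, htend0⟩
    · have ht0' : 0 < t := lt_of_le_of_ne ht.1 (Ne.symm ht0)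
      have hu0 : 0 < t/(2*R) := by positivity
      have huπ : t/(2*R) < π := by
        rw [div_lt_iff₀ (by positivity)]; have := ht.2; rw [hmdef] at this; nlinarith
      have hsne : Real.sin (t/(2*R)) ≠ 0 := (Real.sin_pos_of_pos_of_lt_pi hu0 huπ).ne'
      apply ContinuousAt.continuousWithinAt
      apply ContinuousAt.sub
      · exact continuousAt_const.div continuousAt_id ht0'.ne'
      · exact ((Real.continuous_cos.continuousAt.comp
          (continuousAt_id.div_const (2*R))).div
          (Real.continuous_sin.continuousAt.comp (continuousAt_id.div_const (2*R))) hsne).div_const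
          (2*R)
  -- integrability of f' on (0, m)
  have hint1 : IntervalIntegrable f' volume 0 m := by
    apply intervalIntegral.intervalIntegrable_deriv_of_nonneg
    · rwa [uIcc_of_le hm.le]
    · rw [min_eq_left hm.le, max_eq_right hm.le]; exact hF'
    · rw [min_eq_left hm.le, max_eq_right hm.le]; exact hnonneg
  -- FTC
  have hval1 : ∫ t in (0:ℝ)..m, f' t = 1/(π*R) := by
    rw [intervalIntegral.integral_eq_sub_of_hasDerivAt_of_tendsto hm hF' hint1 htend0 htendm]
    ring
  -- the integrand
  set g : ℝ → ℝ := fun t => 1 / dist (c 0) (c t) ^ 2 - 1 / min t (b - t) ^ 2 with hgdef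
  have hg1eq : EqOn g f' (Icc 0 m) := by
    intro t ht
    have hmin : min t (b - t) = t := by
      apply min_eq_left
      have := ht.2; rw [hmdef] at this; rw [hbdef]; linarith
    simp only [hgdef, hf'def, hsin t, hmin]
  have hsin_sym : ∀ t : ℝ, Real.sin ((b - t)/(2*R)) = Real.sin (t/(2*R)) := by
    intro t
    have : (b - t)/(2*R) = π - t/(2*R) := by rw [hbdef]; field_simp
    rw [this, Real.sin_pi_sub]
  have hg2eq : EqOn g (fun t => f' (b - t)) (Icc m b) := by
    intro t ht
    have hmin : min t (b - t) = b - t := by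
      apply min_eq_right
      have := ht.1; rw [hmdef] at this; rw [hbdef]; linarith [ht.1]
    simp only [hgdef, hf'def, hsin t, hmin, hsin_sym t]
  -- integrability of g on the two pieces
  have hgint1 : IntervalIntegrable g volume 0 m := by
    rw [intervalIntegrable_iff_integrableOn_Ioo_of_le hm.le]
    exact ((intervalIntegrable_iff_integrableOn_Ioo_of_le hm.le).mp hint1).congr_fun
      (fun t ht => (hg1eq (Ioo_subset_Icc_self ht)).symm) measurableSet_Ioo
  have hgint2 : IntervalIntegrable g volume m b := by
    have h2 := (hint1.comp_sub_left b).symm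
    have hbm : b - m = m := by rw [hbdef, hmdef]; ring
    rw [hbm, sub_zero] at h2
    rw [intervalIntegrable_iff_integrableOn_Ioo_of_le hmb.le]
    rw [intervalIntegrable_iff_integrableOn_Ioo_of_le hmb.le] at h2
    exact h2.congr_fun (fun t ht => (hg2eq (Ioo_subset_Icc_self ht)).symm) measurableSet_Ioo
  -- put it together
  have key : ∫ t in Ioo (0:ℝ) b, g t = ∫ t in (0:ℝ)..b, g t := by
    rw [intervalIntegral.integral_of_le hb.le, MeasureTheory.integral_Ioc_eq_integral_Ioo]
  rw [show (∫ t in Ioo (0 : ℝ) (2 * π * R),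
      (1 / dist (c 0) (c t) ^ 2 - 1 / min t (2 * π * R - t) ^ 2)) = ∫ t in Ioo (0:ℝ) b, g t from rfl]
  rw [key, ← intervalIntegral.integral_add_adjacent_intervals hgint1 hgint2]
  have e1 : ∫ t in (0:ℝ)..m, g t = 1/(π*R) := by
    rw [intervalIntegral.integral_congr (g := f') (by rwa [uIcc_of_le hm.le])]
    exact hval1
  have e2 : ∫ t in m..b, g t = 1/(π*R) := by
    rw [intervalIntegral.integral_congr (g := fun t => f' (b - t)) (by rwa [uIcc_of_le hmb.le])]
    rw [intervalIntegral.integral_comp_sub_left f' b]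
    rw [sub_self, show b - m = m by rw [hbdef, hmdef]; ring]
    exact hval1
  rw [e1, e2]
  ring
end

section
/- For R > 0, the improper integral ∫₀^{πR} (1/(R²(2 − 2cos(t/R))) − 1/t²) dt converges and equals 1/(πR). -/
open Real MeasureTheory Set

/-- Key elementary inequality: for `0 < y ≤ π/2`,
`0 ≤ 1/y - cos y / sin y ≤ (π/4) * y`. -/
lemma aux_cot_bound (y : ℝ) (hy : 0 < y) (hy2 : y ≤ π / 2) :
    0 ≤ 1 / y - Real.cos y / Real.sin y ∧
      1 / y - Real.cos y / Real.sin y ≤ π / 4 * y := by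
  have hπ : 0 < π := Real.pi_pos
  have hyπ : y < π := lt_of_le_of_lt hy2 (by linarith)
  have hs : 0 < Real.sin y := Real.sin_pos_of_pos_of_lt_pi hy hyπ
  have hrw : 1 / y - Real.cos y / Real.sin y
      = (Real.sin y - y * Real.cos y) / (y * Real.sin y) := by
    field_simp
  have hnum0 : 0 ≤ Real.sin y - y * Real.cos y := by
    rcases lt_or_eq_of_le hy2 with h | h
    · have hc : 0 < Real.cos y := Real.cos_pos_of_mem_Ioo ⟨by linarith, h⟩
      have ht := Real.lt_tan hy h
      rw [Real.tan_eq_sin_div_cos] at ht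
      have := (lt_div_iff₀ hc).mp ht
      nlinarith
    · rw [h]
      simp [Real.cos_pi_div_two]
  have hnum1 : Real.sin y - y * Real.cos y ≤ y ^ 3 / 2 := by
    have h1 : Real.sin y ≤ y := Real.sin_le hy.le
    have h2 : 1 - y ^ 2 / 2 ≤ Real.cos y := Real.one_sub_sq_div_two_le_cos
    nlinarith
  have hden : 2 / π * y ^ 2 ≤ y * Real.sin y := by
    have := Real.mul_le_sin hy.le hy2
    nlinarith
  have hdenpos : 0 < y * Real.sin y := by positivity
  constructor
  · rw [hrw]
    positivity
  · rw [hrw]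
    have h1 : (Real.sin y - y * Real.cos y) / (y * Real.sin y)
        ≤ (y ^ 3 / 2) / (2 / π * y ^ 2) := by
      apply div_le_div₀ (by positivity) hnum1 (by positivity) hden
    refine h1.trans (le_of_eq ?_)
    field_simp
    ring

/-- For `R > 0`, the improper integral
`∫₀^{πR} (1/(R²(2 − 2cos(t/R))) − 1/t²) dt` converges and equals `1/(πR)`. -/
theorem stmt_1 (R : ℝ) (hR : 0 < R) :
    IntegrableOn (fun t : ℝ => 1 / (R ^ 2 * (2 - 2 * Real.cos (t / R))) - 1 / t ^ 2)
      (Ioo 0 (π * R)) volume ∧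
    ∫ t in Ioo (0 : ℝ) (π * R),
      (1 / (R ^ 2 * (2 - 2 * Real.cos (t / R))) - 1 / t ^ 2) = 1 / (π * R) := by
  have hπ : 0 < π := Real.pi_pos
  set f : ℝ → ℝ := fun t => 1 / (R ^ 2 * (2 - 2 * Real.cos (t / R))) - 1 / t ^ 2 with hf
  set F : ℝ → ℝ := fun t => 1 / t - Real.cos (t / (2 * R)) / (2 * R * Real.sin (t / (2 * R)))
    with hFdef
  have hR2 : (0:ℝ) < 2 * R := by linarith
  -- identity for the denominator
  have hid : ∀ t : ℝ, R ^ 2 * (2 - 2 * Real.cos (t / R)) =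
      (2 * R * Real.sin (t / (2 * R))) ^ 2 := by
    intro t
    have h2 : t / R = 2 * (t / (2 * R)) := by field_simp
    rw [h2, Real.cos_two_mul]
    have := Real.sin_sq_add_cos_sq (t / (2 * R))
    nlinarith
  -- range of x = t/(2R)
  have hx_mem : ∀ t : ℝ, 0 < t → t ≤ π * R → 0 < t / (2 * R) ∧ t / (2 * R) ≤ π / 2 := by
    intro t ht htR
    constructor
    · positivity
    · rw [div_le_div_iff₀ hR2 (by norm_num : (0:ℝ) < 2)] at *
      nlinarith
  -- F 0 = 0
  have hF0 : F 0 = 0 := by simp [hFdef]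
  -- F (π R) = 1/(π R)
  have hFb : F (π * R) = 1 / (π * R) := by
    have h : π * R / (2 * R) = π / 2 := by field_simp
    simp [hFdef, h, Real.cos_pi_div_two]
  -- derivative
  have hderiv : ∀ t ∈ Ioo (0:ℝ) (π * R), HasDerivAt F (f t) t := by
    intro t ht
    obtain ⟨ht0, htR⟩ := ht
    obtain ⟨hx0, hx2⟩ := hx_mem t ht0 htR.le
    have hxπ : t / (2 * R) < π := lt_of_le_of_lt hx2 (by linarith)
    have hs : 0 < Real.sin (t / (2 * R)) := Real.sin_pos_of_pos_of_lt_pi hx0 hxπ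
    have hvne : 2 * R * Real.sin (t / (2 * R)) ≠ 0 := by positivity
    have hlin : HasDerivAt (fun t : ℝ => t / (2 * R)) (1 / (2 * R)) t := by
      simpa using (hasDerivAt_id t).div_const (2 * R)
    have hcos : HasDerivAt (fun t : ℝ => Real.cos (t / (2 * R)))
        (-Real.sin (t / (2 * R)) * (1 / (2 * R))) t :=
      by have := (Real.hasDerivAt_cos (t / (2 * R))).comp t hlin; exact this
    have hsin : HasDerivAt (fun t : ℝ => 2 * R * Real.sin (t / (2 * R)))
        (2 * R * (Real.cos (t / (2 * R)) * (1 / (2 * R)))) t :=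
      (((Real.hasDerivAt_sin (t / (2 * R))).comp t hlin).const_mul (2 * R))
    have hdiv := hcos.div hsin hvne
    have hinv : HasDerivAt (fun t : ℝ => 1 / t) (-(1 / t ^ 2)) t := by
      simpa [one_div] using hasDerivAt_inv (ne_of_gt ht0)
    have := hinv.sub hdiv
    refine this.congr_deriv (Eq.symm ?_)
    rw [hf]
    simp only
    rw [hid t]
    have hpyth := Real.sin_sq_add_cos_sq (t / (2 * R))
    field_simp
    linear_combination (-t^2) * hpyth
  -- nonnegativity of f
  have hpos : ∀ t ∈ Ioo (0:ℝ) (π * R), 0 ≤ f t := by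
    intro t ht
    obtain ⟨ht0, htR⟩ := ht
    obtain ⟨hx0, hx2⟩ := hx_mem t ht0 htR.le
    have hxπ : t / (2 * R) < π := lt_of_le_of_lt hx2 (by linarith)
    have hs : 0 < Real.sin (t / (2 * R)) := Real.sin_pos_of_pos_of_lt_pi hx0 hxπ
    have hsle : Real.sin (t / (2 * R)) ≤ t / (2 * R) := Real.sin_le hx0.le
    have h1 : (2 * R * Real.sin (t / (2 * R))) ^ 2 ≤ t ^ 2 := by
      have : 2 * R * Real.sin (t / (2 * R)) ≤ t := by
        rw [mul_comm]
        calc Real.sin (t / (2 * R)) * (2 * R) ≤ t / (2 * R) * (2 * R) := by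
              apply mul_le_mul_of_nonneg_right hsle hR2.le
          _ = t := by field_simp
      exact pow_le_pow_left₀ (by positivity) this 2
    rw [hf]
    simp only
    rw [hid t]
    have h2 : 1 / t ^ 2 ≤ 1 / (2 * R * Real.sin (t / (2 * R))) ^ 2 := by
      apply one_div_le_one_div_of_le (by positivity) h1
    linarith
  -- bound on F on Icc
  have hFbound : ∀ t ∈ Icc (0:ℝ) (π * R), 0 ≤ F t ∧ F t ≤ π / (16 * R ^ 2) * t := by
    intro t ht
    obtain ⟨ht0, htR⟩ := ht
    rcases eq_or_lt_of_le ht0 with h | h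
    · rw [← h, hF0]
      norm_num
    · obtain ⟨hx0, hx2⟩ := hx_mem t h htR
      obtain ⟨hb0, hb1⟩ := aux_cot_bound (t / (2 * R)) hx0 hx2
      have hFeq : F t = 1 / (2 * R) * (1 / (t / (2 * R)) -
          Real.cos (t / (2 * R)) / Real.sin (t / (2 * R))) := by
        rw [hFdef]
        simp only
        rw [mul_sub]
        congr 1
        · rw [one_div_div]
          field_simp
        · field_simp
      constructor
      · rw [hFeq]; positivity
      · rw [hFeq]
        have : 1 / (2 * R) * (1 / (t / (2 * R)) -
            Real.cos (t / (2 * R)) / Real.sin (t / (2 * R)))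
            ≤ 1 / (2 * R) * (π / 4 * (t / (2 * R))) := by
          apply mul_le_mul_of_nonneg_left hb1 (by positivity)
        refine this.trans (le_of_eq ?_)
        field_simp
        ring
  -- continuity of F on Icc 0 (π R)
  have hcont : ContinuousOn F (Icc 0 (π * R)) := by
    intro t ht
    rcases eq_or_lt_of_le ht.1 with h | h
    · -- at 0, use squeeze
      rw [← h]
      rw [ContinuousWithinAt, hF0]
      apply squeeze_zero' (g := fun t => π / (16 * R ^ 2) * t)
      · filter_upwards [self_mem_nhdsWithin] with s hs using (hFbound s hs).1
      · filter_upwards [self_mem_nhdsWithin] with s hs using (hFbound s hs).2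
      · have : Filter.Tendsto (fun t : ℝ => π / (16 * R ^ 2) * t) (nhds 0)
            (nhds (π / (16 * R ^ 2) * 0)) := by
          exact (continuous_const.mul continuous_id).tendsto 0
        rw [mul_zero] at this
        exact this.mono_left nhdsWithin_le_nhds
    · -- at t > 0, F is continuous
      obtain ⟨hx0, hx2⟩ := hx_mem t h ht.2
      have hxπ : t / (2 * R) < π := lt_of_le_of_lt hx2 (by linarith)
      have hs : 0 < Real.sin (t / (2 * R)) := Real.sin_pos_of_pos_of_lt_pi hx0 hxπ
      have : ContinuousAt F t := by
        apply ContinuousAt.sub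
        · exact continuousAt_const.div continuousAt_id (ne_of_gt h)
        · apply ContinuousAt.div
          · exact (Real.continuous_cos.comp (continuous_id.div_const (2 * R))).continuousAt
          · exact (continuous_const.mul
              (Real.continuous_sin.comp (continuous_id.div_const (2 * R)))).continuousAt
          · positivity
      exact this.continuousWithinAt
  have hab : (0:ℝ) ≤ π * R := by positivity
  -- integrability
  have hint : IntegrableOn f (Ioc 0 (π * R)) volume :=
    intervalIntegral.integrableOn_deriv_of_nonneg hcont hderiv hpos
  have hintIoo : IntegrableOn f (Ioo 0 (π * R)) volume :=
    hint.mono_set Ioo_subset_Ioc_self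
  refine ⟨hintIoo, ?_⟩
  have hval : ∫ t in (0:ℝ)..(π * R), f t = F (π * R) - F 0 :=
    intervalIntegral.integral_eq_sub_of_hasDeriv_right_of_le hab hcont
      (fun x hx => (hderiv x hx).hasDerivWithinAt)
      ((intervalIntegrable_iff_integrableOn_Ioc_of_le hab).2 hint)
  rw [intervalIntegral.integral_of_le hab, integral_Ioc_eq_integral_Ioo] at hval
  rw [show (∫ t in Ioo (0:ℝ) (π * R),
      (1 / (R ^ 2 * (2 - 2 * Real.cos (t / R))) - 1 / t ^ 2)) = ∫ t in Ioo (0:ℝ) (π * R), f t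
    from rfl, hval, hFb, hF0, sub_zero]
end

section
/- Let K be a C² smooth simple closed curve in ℝ³, parameterized by arclength, whose curvature is everywhere at most 1/r for some r > 0. If x, y ∈ K satisfy arc(x,y) ≤ πr, then |x − y| ≥ 2r·sin(arc(x,y)/(2r)). In particular, if arc(x,y) = πr then |x − y| ≥ 2r. -/
open Real Set
open scoped RealInnerProductSpace

variable {E : Type*} [NormedAddCommGroup E] [InnerProductSpace ℝ E]

set_option maxHeartbeats 1000000 in
/-- Tangent-angle comparison (one-sided): if `T` is a differentiable unit-vector field
with `‖T'‖ ≤ 1/r`, then `⟪T p, T q⟫ ≥ cos ((q - p)/r)` for `0 ≤ q - p ≤ πr/2`. -/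
lemma tangent_inner_ge_cos (r : ℝ) (hr : 0 < r) (T : ℝ → E)
    (hT : Differentiable ℝ T) (hTunit : ∀ u, ‖T u‖ = 1)
    (hT' : ∀ u, ‖deriv T u‖ ≤ 1 / r)
    (p q : ℝ) (hpq : p ≤ q) (hq : q - p ≤ π * r / 2) :
    Real.cos ((q - p) / r) ≤ ⟪T p, T q⟫ := by
  rcases eq_or_lt_of_le hpq with rfl | hpq'
  · simp [real_inner_self_eq_norm_sq, hTunit p]
  -- orthogonality of T and T'
  have horth : ∀ u, ⟪T u, deriv T u⟫ = 0 := by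
    intro u
    have hconst : (fun u => ⟪T u, T u⟫) = fun _ : ℝ => (1 : ℝ) := by
      funext v
      rw [real_inner_self_eq_norm_sq, hTunit v, one_pow]
    have h1 := (hT u).hasDerivAt.inner ℝ (hT u).hasDerivAt
    rw [hconst] at h1
    have h2 := h1.unique (hasDerivAt_const u (1 : ℝ))
    have hcomm : ⟪T u, deriv T u⟫ = ⟪deriv T u, T u⟫ := real_inner_comm _ _
    linarith
  -- chord bound for T
  have chord : ∀ u v : ℝ, ‖T u - T v‖ ≤ 1 / r * ‖u - v‖ := fun u v =>
    convex_univ.norm_image_sub_le_of_norm_deriv_le (fun x _ => hT x) (fun x _ => hT' x)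
      trivial trivial
  obtain ⟨F, hF⟩ : ∃ F : ℝ → ℝ, F = fun u => ⟪T p, T u⟫ := ⟨_, rfl⟩
  obtain ⟨F', hF'⟩ : ∃ F' : ℝ → ℝ, F' = fun u => ⟪T p, deriv T u⟫ := ⟨_, rfl⟩
  have hFd : ∀ u, HasDerivAt F (F' u) u := by
    intro u
    have := (hasDerivAt_const u (T p)).inner ℝ (hT u).hasDerivAt
    rw [hF, hF']
    simpa using this
  have hFval : ∀ u, F u = ⟪T p, T u⟫ := fun u => by rw [hF]
  have hF'val : ∀ u, F' u = ⟪T p, deriv T u⟫ := fun u => by rw [hF']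
  have hFle : ∀ u, |F u| ≤ 1 := by
    intro u
    rw [hFval]
    have := abs_real_inner_le_norm (T p) (T u)
    rwa [hTunit p, hTunit u, one_mul] at this
  have hF'ge : ∀ u, -(Real.sqrt (1 - F u ^ 2) / r) ≤ F' u := by
    intro u
    obtain ⟨w, hw⟩ : ∃ w, w = T p - F u • T u := ⟨_, rfl⟩
    have hTu1 : ⟪T u, T u⟫ = 1 := by rw [real_inner_self_eq_norm_sq, hTunit u, one_pow]
    have hw2 : ‖w‖ ^ 2 = 1 - F u ^ 2 := by
      rw [hw, norm_sub_sq_real, hTunit p, norm_smul, hTunit u, real_inner_smul_right,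
        ← hFval u]
      simp only [Real.norm_eq_abs, mul_one, one_pow]
      rw [sq_abs]
      ring
    have hdecomp : F' u = ⟪w, deriv T u⟫ := by
      rw [hF'val, hw, inner_sub_left, real_inner_smul_left, horth u, mul_zero, sub_zero]
    have h1 : -(‖w‖ * ‖deriv T u‖) ≤ ⟪w, deriv T u⟫ :=
      neg_le_of_abs_le (abs_real_inner_le_norm w (deriv T u))
    have hwn : ‖w‖ = Real.sqrt (1 - F u ^ 2) := by
      rw [← hw2, Real.sqrt_sq (norm_nonneg w)]
    have h2 : ‖w‖ * ‖deriv T u‖ ≤ Real.sqrt (1 - F u ^ 2) * (1 / r) :=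
      mul_le_mul (le_of_eq hwn) (hT' u) (norm_nonneg _) (Real.sqrt_nonneg _)
    rw [hdecomp]
    calc -(Real.sqrt (1 - F u ^ 2) / r) = -(Real.sqrt (1 - F u ^ 2) * (1 / r)) := by ring
    _ ≤ -(‖w‖ * ‖deriv T u‖) := by linarith
    _ ≤ ⟪w, deriv T u⟫ := h1
  -- the ε-perturbed comparison
  have H : ∀ ε ∈ Ioo (0 : ℝ) (1 / 4), Real.cos ((1 + ε) * (q - p) / r) ≤ F q := by
    rintro ε ⟨hε0, hε4⟩
    obtain ⟨η, hη⟩ : ∃ η, η = min (q - p) (r * Real.sqrt ε) := ⟨_, rfl⟩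
    have hη0 : 0 < η := by
      rw [hη]
      exact lt_min (by linarith) (mul_pos hr (Real.sqrt_pos.mpr hε0))
    have hηq : η ≤ q - p := by rw [hη]; exact min_le_left _ _
    obtain ⟨x, hxdef⟩ : ∃ x, x = η / r := ⟨_, rfl⟩
    have hx0 : 0 < x := by rw [hxdef]; exact div_pos hη0 hr
    have hx2 : x ^ 2 ≤ ε := by
      have hxs : x ≤ Real.sqrt ε := by
        have h12 : η ≤ r * Real.sqrt ε := by rw [hη]; exact min_le_right _ _
        rw [hxdef, div_le_iff₀ hr]
        nlinarith
      calc x ^ 2 ≤ Real.sqrt ε ^ 2 := by nlinarith [Real.sqrt_nonneg ε]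
      _ = ε := Real.sq_sqrt hε0.le
    have hxlt : x < 1 / 2 := by nlinarith [sq_nonneg (x - 1 / 2)]
    obtain ⟨G, hG⟩ : ∃ G : ℝ → ℝ, G = fun u => Real.cos ((1 + ε) * (u - p) / r) := ⟨_, rfl⟩
    obtain ⟨G', hG'⟩ : ∃ G' : ℝ → ℝ,
        G' = fun u => -((1 + ε) / r) * Real.sin ((1 + ε) * (u - p) / r) := ⟨_, rfl⟩
    have hGval : ∀ u, G u = Real.cos ((1 + ε) * (u - p) / r) := fun u => by rw [hG]
    have hG'val : ∀ u, G' u = -((1 + ε) / r) * Real.sin ((1 + ε) * (u - p) / r) :=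
      fun u => by rw [hG']
    have hGd : ∀ u, HasDerivAt G (G' u) u := by
      intro u
      have hin : HasDerivAt (fun u : ℝ => (1 + ε) * (u - p) / r) ((1 + ε) / r) u := by
        have := (((hasDerivAt_id u).sub_const p).const_mul (1 + ε)).div_const r
        simpa using this
      have h2 := hin.cos
      rw [hG, hG'val]
      convert h2 using 1
      ring
    -- start condition
    have hstart : G (p + η) ≤ F (p + η) := by
      have hchord : ‖T p - T (p + η)‖ ≤ x := by
        have h3 := chord p (p + η)
        have h1 : ‖p - (p + η)‖ = η := by
          rw [show p - (p + η) = -η by ring, norm_neg, Real.norm_eq_abs, abs_of_pos hη0]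
        rw [h1] at h3
        rw [hxdef]
        calc ‖T p - T (p + η)‖ ≤ 1 / r * η := h3
        _ = η / r := by ring
      have hFlb : 1 - x ^ 2 / 2 ≤ F (p + η) := by
        have hnorm : ‖T p - T (p + η)‖ ^ 2 = 2 - 2 * F (p + η) := by
          rw [norm_sub_sq_real, hTunit p, hTunit (p + η), ← hFval]
          ring
        nlinarith [norm_nonneg (T p - T (p + η))]
      obtain ⟨y, hy⟩ : ∃ y, y = (1 + ε) * x := ⟨_, rfl⟩
      have hy0 : 0 < y := by rw [hy]; positivity
      have hGval2 : G (p + η) = Real.cos y := by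
        rw [hGval, hy, hxdef]
        congr 1
        field_simp
        ring
      have hy1 : |y| ≤ 1 := by
        rw [abs_of_pos hy0, hy]
        nlinarith [mul_lt_mul_of_pos_left hxlt (show (0:ℝ) < 1 + ε by linarith)]
      have hcb := Real.cos_bound hy1
      have hcos : Real.cos y ≤ 1 - y ^ 2 / 2 + |y| ^ 4 * (5 / 96) := by
        have h4 := abs_le.mp hcb
        linarith [h4.2]
      rw [hGval2]
      rw [abs_of_pos hy0] at hcos
      have h5 : 1 - y ^ 2 / 2 + y ^ 4 * (5 / 96) ≤ 1 - x ^ 2 / 2 := by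
        rw [hy]
        have h20 : x ^ 2 * x ^ 2 ≤ ε * x ^ 2 := by nlinarith [sq_nonneg x]
        have h21 : (1 + ε) ^ 4 ≤ (5 / 4 : ℝ) ^ 4 :=
          pow_le_pow_left₀ (by linarith) (by linarith) 4
        have h22 : (1 + ε) ^ 4 * (x ^ 2 * x ^ 2) ≤ (5 / 4 : ℝ) ^ 4 * (ε * x ^ 2) :=
          mul_le_mul h21 h20 (by positivity) (by positivity)
        nlinarith [mul_pos hx0 hε0, sq_nonneg (ε * x), mul_pos (mul_pos hε0 hε0) (mul_pos hx0 hx0)]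
      linarith
    -- contact condition
    have hcontact : ∀ u ∈ Ico (p + η) q, G u = F u → G' u < F' u := by
      intro u hu heq
      obtain ⟨θ, hθ⟩ : ∃ θ, θ = (1 + ε) * (u - p) / r := ⟨_, rfl⟩
      have hθ0 : 0 < θ := by
        rw [hθ]
        apply div_pos _ hr
        have h6 : p + η ≤ u := hu.1
        nlinarith
      have hθπ : θ < π := by
        have hup : u - p < π * r / 2 := by
          have h7 := hu.2
          linarith
        rw [hθ, div_lt_iff₀ hr]
        calc (1 + ε) * (u - p) < (1 + ε) * (π * r / 2) :=
              mul_lt_mul_of_pos_left hup (by linarith)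
        _ ≤ (5 / 4) * (π * r / 2) := by
              apply mul_le_mul_of_nonneg_right (by linarith)
              positivity
        _ < π * r := by nlinarith [Real.pi_pos]
      have hsθ : 0 < Real.sin θ := Real.sin_pos_of_pos_of_lt_pi hθ0 hθπ
      have hFu : F u = Real.cos θ := by rw [← heq, hGval, hθ]
      have hsqrt : Real.sqrt (1 - F u ^ 2) = Real.sin θ := by
        rw [hFu, show (1 : ℝ) - Real.cos θ ^ 2 = Real.sin θ ^ 2 from by
          have h8 := Real.sin_sq_add_cos_sq θ; linarith]
        exact Real.sqrt_sq hsθ.le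
      have h1 := hF'ge u
      rw [hsqrt] at h1
      have h9 : -((1 + ε) / r) * Real.sin θ < -(Real.sin θ / r) := by
        have h13 : Real.sin θ / r < (1 + ε) / r * Real.sin θ := by
          rw [div_mul_eq_mul_div, div_lt_div_iff₀ hr hr]
          nlinarith [mul_pos (mul_pos hε0 hsθ) hr]
        linarith
      rw [hG'val, ← hθ]
      exact lt_of_lt_of_le h9 h1
    have happ := image_le_of_deriv_right_lt_deriv_boundary
      (f := G) (f' := G') (B := F) (B' := F') (a := p + η) (b := q)
      (fun u _ => (hGd u).continuousAt.continuousWithinAt)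
      (fun u _ => (hGd u).hasDerivWithinAt)
      hstart hFd hcontact
    have hqmem : q ∈ Icc (p + η) q := ⟨by linarith, le_refl q⟩
    have h10 := happ hqmem
    rwa [hGval] at h10
  -- take the limit ε → 0⁺
  rw [← hFval q]
  have hcont : Continuous fun ε : ℝ => Real.cos ((1 + ε) * (q - p) / r) := by
    apply Real.continuous_cos.comp
    continuity
  have htend : Filter.Tendsto (fun ε : ℝ => Real.cos ((1 + ε) * (q - p) / r))
      (nhdsWithin 0 (Ioi 0)) (nhds (Real.cos ((q - p) / r))) := by
    have h0 : Real.cos ((1 + (0 : ℝ)) * (q - p) / r) = Real.cos ((q - p) / r) := by norm_num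
    have h11 := hcont.continuousAt (x := (0 : ℝ)).tendsto
    rw [h0] at h11
    exact h11.mono_left nhdsWithin_le_nhds
  have hev : ∀ᶠ ε in nhdsWithin (0 : ℝ) (Ioi 0),
      Real.cos ((1 + ε) * (q - p) / r) ≤ F q := by
    filter_upwards [Ioo_mem_nhdsGT_of_mem (by norm_num : (0 : ℝ) ∈ Ico (0 : ℝ) (1 / 4))]
      with ε hε
    exact H ε hε
  exact le_of_tendsto htend hev

lemma core (r : ℝ) (hr : 0 < r) (γ : ℝ → E)
    (hγ : Differentiable ℝ γ) (hT : Differentiable ℝ (deriv γ))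
    (hunit : ∀ s, ‖deriv γ s‖ = 1)
    (hcurv : ∀ s, ‖deriv (deriv γ) s‖ ≤ 1 / r)
    (a b : ℝ) (hab : a ≤ b) (hle : b - a ≤ π * r) :
    2 * r * Real.sin ((b - a) / (2 * r)) ≤ dist (γ a) (γ b) := by
  set T := deriv γ with hTdef
  set m := (a + b) / 2 with hm
  -- the comparison function
  set φ : ℝ → ℝ := fun u => ⟪T m, γ u⟫ - r * Real.sin ((u - m) / r) with hφ
  have hφd : ∀ u, HasDerivAt φ (⟪T m, T u⟫ - Real.cos ((u - m) / r)) u := by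
    intro u
    have h1 : HasDerivAt (fun u => ⟪T m, γ u⟫) (⟪T m, T u⟫) u := by
      have := (hasDerivAt_const u (T m)).inner ℝ (hγ u).hasDerivAt
      simpa using this
    have h2 : HasDerivAt (fun u => r * Real.sin ((u - m) / r)) (Real.cos ((u - m) / r)) u := by
      have hin : HasDerivAt (fun u : ℝ => (u - m) / r) (1 / r) u := by
        simpa using ((hasDerivAt_id u).sub_const m).div_const r
      have := (hin.sin).const_mul r
      exact this.congr_deriv (by field_simp)
    exact h1.sub h2
  have hangle : ∀ u ∈ Icc a b, Real.cos ((u - m) / r) ≤ ⟪T m, T u⟫ := by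
    intro u hu
    obtain ⟨hu1, hu2⟩ := hu
    rcases le_total m u with hmu | hmu
    · exact tangent_inner_ge_cos r hr T hT hunit hcurv m u hmu (by rw [hm]; linarith)
    · have := tangent_inner_ge_cos r hr T hT hunit hcurv u m hmu (by rw [hm]; linarith)
      rw [real_inner_comm] at this
      have hc : (u - m) / r = -((m - u) / r) := by ring
      rw [hc, Real.cos_neg]
      exact this
  have hmono : MonotoneOn φ (Icc a b) := by
    apply monotoneOn_of_deriv_nonneg (convex_Icc a b)
    · exact fun u _ => ((hφd u).continuousAt).continuousWithinAt
    · intro u hu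
      exact ((hφd u).differentiableAt).differentiableWithinAt
    · intro u hu
      rw [interior_Icc] at hu
      rw [(hφd u).deriv]
      have := hangle u (Ioo_subset_Icc_self hu)
      linarith
  have hφab : φ a ≤ φ b := hmono (left_mem_Icc.mpr hab) (right_mem_Icc.mpr hab) hab
  have key : 2 * r * Real.sin ((b - a) / (2 * r)) ≤ ⟪T m, γ b - γ a⟫ := by
    rw [inner_sub_right]
    have ha' : (a - m) / r = -((b - a) / (2 * r)) := by rw [hm]; field_simp; ring
    have hb' : (b - m) / r = (b - a) / (2 * r) := by rw [hm]; field_simp; ring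
    have := hφab
    rw [hφ] at this
    simp only [ha', hb', Real.sin_neg] at this
    linarith
  have hcs : ⟪T m, γ b - γ a⟫ ≤ ‖γ b - γ a‖ := by
    have := real_inner_le_norm (T m) (γ b - γ a)
    rwa [hunit m, one_mul] at this
  rw [dist_eq_norm, norm_sub_rev]
  linarith

/-- Schur's theorem with circular comparison: if `γ` is a `C²` simple closed curve
in `ℝ³` of length `L`, parameterized by arclength (so `γ` has period `L`, unit
speed, and is injective on `[0,L)`), with curvature everywhere at most `1/r`, and
`x = γ s`, `y = γ t` satisfy `arc(x,y) ≤ πr`, then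
`|x − y| ≥ 2r·sin(arc(x,y)/(2r))`.  Here `arc(x,y) = min |s−t| (L − |s−t|)` for
`s, t ∈ [0, L)`. -/
theorem stmt_5 (L r : ℝ) (hL : 0 < L) (hr : 0 < r)
    (γ : ℝ → EuclideanSpace ℝ (Fin 3))
    (hsmooth : ContDiff ℝ 2 γ)
    (hper : ∀ s, γ (s + L) = γ s)
    (hunit : ∀ s, ‖deriv γ s‖ = 1)
    (hinj : InjOn γ (Ico 0 L))
    (hcurv : ∀ s, ‖deriv (deriv γ) s‖ ≤ 1 / r)
    (s t : ℝ) (hs : s ∈ Ico 0 L) (ht : t ∈ Ico 0 L)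
    (harc : min |s - t| (L - |s - t|) ≤ π * r) :
    2 * r * Real.sin (min |s - t| (L - |s - t|) / (2 * r)) ≤ dist (γ s) (γ t) := by
  have h2 : ContDiff ℝ (1 + 1) γ := by norm_num; exact hsmooth
  have hγ : Differentiable ℝ γ := hsmooth.differentiable (by norm_num)
  have hT : Differentiable ℝ (deriv γ) :=
    (contDiff_succ_iff_deriv.mp h2).2.2.differentiable (by norm_num)
  rcases le_total |s - t| (L - |s - t|) with hmin | hmin
  · rw [min_eq_left hmin] at harc ⊢
    rcases le_total s t with hst | hst
    · have h1 : |s - t| = t - s := by rw [abs_sub_comm]; exact abs_of_nonneg (by linarith)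
      rw [h1] at harc ⊢
      exact core r hr γ hγ hT hunit hcurv s t hst harc
    · have h1 : |s - t| = s - t := abs_of_nonneg (by linarith)
      rw [h1] at harc ⊢
      rw [dist_comm]
      exact core r hr γ hγ hT hunit hcurv t s hst harc
  · rw [min_eq_right hmin] at harc ⊢
    rcases le_total s t with hst | hst
    · have h1 : |s - t| = t - s := by rw [abs_sub_comm]; exact abs_of_nonneg (by linarith)
      rw [h1] at harc ⊢
      have hb : γ (s + L) = γ s := hper s
      have := core r hr γ hγ hT hunit hcurv t (s + L) (by have := ht.2; have := hs.1; linarith) (by linarith)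
      rw [hb, dist_comm] at this
      convert this using 3 <;> ring
    · have h1 : |s - t| = s - t := abs_of_nonneg (by linarith)
      rw [h1] at harc ⊢
      have hb : γ (t + L) = γ t := hper t
      have := core r hr γ hγ hT hunit hcurv s (t + L) (by have := hs.2; have := ht.1; linarith) (by linarith)
      rw [hb] at this
      convert this using 3 <;> ring
end

section
/- Let K be a C² smooth knot in ℝ³ with thickness radius R(K) = r, where R(K) = min{MinRad(K), (1/2)·(critical self-distance of K)}. Then for any x, y ∈ K with arc(x,y) ≥ πr, one has |x − y| ≥ 2r. -/
open Real Set

set_option maxHeartbeats 1000000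

open InnerProductGeometry Filter Topology intervalIntegral

section Aux
variable {V : Type*} [NormedAddCommGroup V] [InnerProductSpace ℝ V]


lemma antitone_arccos : Antitone Real.arccos := fun x y h => by
  simp only [Real.arccos_eq_pi_div_two_sub_arcsin]
  linarith [Real.monotone_arcsin h]

lemma inner_unit (a b : V) (ha : ‖a‖ = 1) (hb : ‖b‖ = 1) :
    (inner ℝ a b : ℝ) = 1 - ‖a - b‖ ^ 2 / 2 := by
  have := norm_sub_sq_real a b
  rw [ha, hb] at this
  linarith

lemma angle_unit (a b : V) (ha : ‖a‖ = 1) (hb : ‖b‖ = 1) :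
    angle a b = Real.arccos (inner ℝ a b : ℝ) := by
  rw [angle, ha, hb]; norm_num

lemma angle_le_of_inner_ge {a b : V} (ha : ‖a‖ = 1) (hb : ‖b‖ = 1) {θ : ℝ}
    (hθ0 : 0 ≤ θ) (hθπ : θ ≤ π) (h : Real.cos θ ≤ (inner ℝ a b : ℝ)) :
    angle a b ≤ θ := by
  rw [angle_unit a b ha hb]
  calc Real.arccos (inner ℝ a b : ℝ) ≤ Real.arccos (Real.cos θ) := _root_.antitone_arccos h
    _ = θ := Real.arccos_cos hθ0 hθπ

lemma angle_le_two_arcsin {a b : V} (ha : ‖a‖ = 1) (hb : ‖b‖ = 1) {c : ℝ}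
    (hc : 0 ≤ c) (h : ‖a - b‖ ≤ c) : angle a b ≤ 2 * Real.arcsin (c / 2) := by
  rcases le_or_gt 2 c with hc2 | hc2
  · have : Real.arcsin (c / 2) = π / 2 := Real.arcsin_of_one_le (by linarith)
    rw [this]
    linarith [angle_le_pi a b]
  · have h1 : Real.sin (Real.arcsin (c / 2)) = c / 2 :=
      Real.sin_arcsin (by linarith) (by linarith)
    have h0 : 0 ≤ Real.arcsin (c / 2) := Real.arcsin_nonneg.2 (by linarith)
    have h2 : Real.arcsin (c / 2) ≤ π / 2 := Real.arcsin_le_pi_div_two _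
    apply angle_le_of_inner_ge ha hb (by linarith) (by linarith)
    have hs := Real.sin_sq_add_cos_sq (Real.arcsin (c / 2))
    rw [h1] at hs
    have hcos : Real.cos (2 * Real.arcsin (c / 2)) = 1 - c ^ 2 / 2 := by
      rw [Real.cos_two_mul]; nlinarith
    rw [hcos, inner_unit a b ha hb]
    have hab : 0 ≤ ‖a - b‖ := norm_nonneg _
    nlinarith


lemma angle_triangle_unit {a b c : V} (ha : ‖a‖ = 1) (hb : ‖b‖ = 1) (hc : ‖c‖ = 1) :
    angle a c ≤ angle a b + angle b c := by
  set α := angle a b with hα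
  set β := angle b c with hβ
  have hα0 : 0 ≤ α := angle_nonneg a b
  have hβ0 : 0 ≤ β := angle_nonneg b c
  have hαπ : α ≤ π := angle_le_pi a b
  have hβπ : β ≤ π := angle_le_pi b c
  rcases le_or_gt π (α + β) with hsum | hsum
  · linarith [angle_le_pi a c]
  -- main case
  have hcosα : Real.cos α = (inner ℝ a b : ℝ) := by
    rw [hα, cos_angle, ha, hb]; norm_num
  have hcosβ : Real.cos β = (inner ℝ b c : ℝ) := by
    rw [hβ, cos_angle, hb, hc]; norm_num
  set p : V := a - (inner ℝ a b : ℝ) • b with hp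
  set q : V := c - (inner ℝ b c : ℝ) • b with hq
  have hb2 : (inner ℝ b b : ℝ) = 1 := by
    rw [real_inner_self_eq_norm_sq, hb]; norm_num
  have hpn : ‖p‖ ^ 2 = 1 - (inner ℝ a b : ℝ) ^ 2 := by
    rw [hp, norm_sub_sq_real, norm_smul, inner_smul_right, ha, hb, Real.norm_eq_abs, mul_one,
      sq_abs]
    ring
  have hqn : ‖q‖ ^ 2 = 1 - (inner ℝ b c : ℝ) ^ 2 := by
    rw [hq, norm_sub_sq_real, norm_smul, inner_smul_right, hc, hb, Real.norm_eq_abs, mul_one,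
      sq_abs, real_inner_comm b c]
    ring
  have hsinα : ‖p‖ = Real.sin α := by
    have h1 : Real.sin α ^ 2 = 1 - (inner ℝ a b : ℝ) ^ 2 := by
      rw [← hcosα]; nlinarith [Real.sin_sq_add_cos_sq α]
    have h2 : 0 ≤ Real.sin α := Real.sin_nonneg_of_nonneg_of_le_pi hα0 hαπ
    nlinarith [norm_nonneg p, hpn]
  have hsinβ : ‖q‖ = Real.sin β := by
    have h1 : Real.sin β ^ 2 = 1 - (inner ℝ b c : ℝ) ^ 2 := by
      rw [← hcosβ]; nlinarith [Real.sin_sq_add_cos_sq β]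
    have h2 : 0 ≤ Real.sin β := Real.sin_nonneg_of_nonneg_of_le_pi hβ0 hβπ
    nlinarith [norm_nonneg q, hqn]
  have hdecomp : (inner ℝ a c : ℝ) = (inner ℝ a b : ℝ) * (inner ℝ b c : ℝ) + (inner ℝ p q : ℝ) := by
    rw [hp, hq]
    simp [inner_sub_left, inner_sub_right, inner_smul_left, inner_smul_right, hb2,
      real_inner_comm b c]
    rw [hb]; ring
  have hpq : -(‖p‖ * ‖q‖) ≤ (inner ℝ p q : ℝ) := by
    have := abs_real_inner_le_norm p q
    rw [abs_le] at this
    exact this.1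
  have hineq : Real.cos (α + β) ≤ (inner ℝ a c : ℝ) := by
    rw [Real.cos_add, hdecomp, hcosα, hcosβ]
    have := hpq
    rw [hsinα, hsinβ] at this
    linarith
  have := Real.arccos_cos (by linarith : (0:ℝ) ≤ α + β) hsum.le
  calc angle a c = Real.arccos (inner ℝ a c : ℝ) := by rw [angle, ha, hc]; norm_num
    _ ≤ Real.arccos (Real.cos (α + β)) := by
        simp only [Real.arccos_eq_pi_div_two_sub_arcsin]
        linarith [Real.monotone_arcsin hineq]
    _ = α + β := this


lemma subdiv {T : ℝ → V} (hT : ∀ u, ‖T u‖ = 1) {κ : ℝ} (hκ : 0 ≤ κ)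
    (hlip : ∀ u v, ‖T u - T v‖ ≤ κ * |u - v|) :
    ∀ n : ℕ, 1 ≤ n → ∀ u v : ℝ,
      angle (T u) (T v) ≤ n * (2 * Real.arcsin (κ * |u - v| / (2 * n))) := by
  intro n hn
  induction n, hn using Nat.le_induction with
  | base =>
    intro u v
    push_cast
    rw [one_mul, mul_one]
    exact angle_le_two_arcsin (hT u) (hT v) (by positivity) (hlip u v)
  | succ n hn ih =>
    intro u v
    set m : ℝ := (n : ℝ) + 1 with hm
    have hm0 : (0:ℝ) < m := by positivity
    set w : ℝ := v + (u - v) / m with hw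
    have h1 : |w - v| = |u - v| / m := by
      rw [hw]; rw [show v + (u - v) / m - v = (u - v) / m by ring, abs_div, abs_of_pos hm0]
    have h2 : |u - w| = |u - v| * n / m := by
      rw [hw, show u - (v + (u - v) / m) = (u - v) * n / m by field_simp; ring,
        abs_div, abs_mul, abs_of_pos hm0, Nat.abs_cast]
    have t1 : angle (T u) (T w) ≤ n * (2 * Real.arcsin (κ * |u - v| / (2 * m))) := by
      have := ih u w
      rwa [h2, show κ * (|u - v| * n / m) / (2 * n) = κ * |u - v| / (2 * m) by
        have : (n:ℝ) ≠ 0 := by positivity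
        field_simp] at this
    have t2 : angle (T w) (T v) ≤ 2 * Real.arcsin (κ * |u - v| / (2 * m)) := by
      have := angle_le_two_arcsin (hT w) (hT v) (a := T w) (b := T v)
        (c := κ * (|u - v| / m)) (by positivity) (by rw [← h1]; exact hlip w v)
      rwa [show κ * (|u - v| / m) / 2 = κ * |u - v| / (2 * m) by
        rw [hm]; field_simp] at this
    calc angle (T u) (T v) ≤ angle (T u) (T w) + angle (T w) (T v) :=
          angle_triangle_unit (hT u) (hT w) (hT v)
      _ ≤ (n + 1 : ℕ) * (2 * Real.arcsin (κ * |u - v| / (2 * m))) := by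
          push_cast; linarith
      _ = (n + 1 : ℕ) * (2 * Real.arcsin (κ * |u - v| / (2 * ((n:ℕ) + 1 : ℕ)))) := by
          push_cast; rfl

lemma arcsin_limit {x : ℝ} (hx : 0 < x) :
    Tendsto (fun n : ℕ => (n:ℝ) * (2 * Real.arcsin (x / (2 * n)))) atTop (𝓝 x) := by
  have hd : HasDerivAt Real.arcsin 1 0 := by
    have := Real.hasDerivAt_arcsin (by norm_num : (0:ℝ) ≠ -1) (by norm_num : (0:ℝ) ≠ 1)
    simpa using this
  have hslope : Tendsto (fun y : ℝ => Real.arcsin y / y) (𝓝[≠] 0) (𝓝 1) := by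
    have := hasDerivAt_iff_tendsto_slope.1 hd
    refine this.congr' ?_
    filter_upwards [self_mem_nhdsWithin] with y hy
    simp [slope_def_field, div_eq_inv_mul]
  have hy : Tendsto (fun n : ℕ => x / (2 * n)) atTop (𝓝[≠] 0) := by
    apply tendsto_nhdsWithin_of_tendsto_nhds_of_eventually_within
    · have : Tendsto (fun n : ℕ => 2 * (n:ℝ)) atTop atTop :=
        (tendsto_natCast_atTop_atTop).const_mul_atTop two_pos
      simpa using Tendsto.div_atTop tendsto_const_nhds this
    · filter_upwards [eventually_ge_atTop 1] with n hn
      have : (0:ℝ) < n := by exact_mod_cast hn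
      have : 0 < x / (2 * n) := by positivity
      exact this.ne'
  have hcomp : Tendsto (fun n : ℕ => x * (Real.arcsin (x / (2 * n)) / (x / (2 * n))))
      atTop (𝓝 (x * 1)) := (hslope.comp hy).const_mul x
  rw [mul_one] at hcomp
  refine hcomp.congr' ?_
  filter_upwards [eventually_ge_atTop 1] with n hn
  have hn0 : (0:ℝ) < n := by exact_mod_cast hn
  have h2n : x / (2 * n) ≠ 0 := by positivity
  field_simp

lemma angle_le_lip {T : ℝ → V} (hT : ∀ u, ‖T u‖ = 1) {κ : ℝ} (hκ : 0 ≤ κ)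
    (hlip : ∀ u v, ‖T u - T v‖ ≤ κ * |u - v|) (u v : ℝ) :
    angle (T u) (T v) ≤ κ * |u - v| := by
  rcases eq_or_lt_of_le (by positivity : (0:ℝ) ≤ κ * |u - v|) with h0 | h0
  · have : ‖T u - T v‖ ≤ 0 := le_of_le_of_eq (hlip u v) h0.symm
    have : T u = T v := by
      rwa [norm_le_zero_iff, sub_eq_zero] at this
    rw [this, ← h0, angle_self]
    intro h
    have h1 := hT v
    rw [h] at h1
    simp at h1
  · refine ge_of_tendsto (arcsin_limit h0) ?_
    filter_upwards [eventually_ge_atTop 1] with n hn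
    exact subdiv hT hκ hlip n hn u v

variable [CompleteSpace V]
lemma schur (γ : ℝ → V) (hsmooth : ContDiff ℝ 2 γ) (hunit : ∀ u, ‖deriv γ u‖ = 1)
    {r : ℝ} (hr : 0 < r) (hcurv : ∀ u, ‖deriv (deriv γ) u‖ ≤ 1 / r) (a : ℝ) :
    2 * r ≤ ‖γ (a + π * r) - γ a‖ := by
  have hdγ : Differentiable ℝ γ := hsmooth.differentiable (by norm_num)
  have h2 : ContDiff ℝ ((1:WithTop ℕ∞)+1) γ := by norm_num at hsmooth ⊢; exact hsmooth
  have h1 : ContDiff ℝ 1 (deriv γ) := (contDiff_succ_iff_deriv.mp h2).2.2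
  have hdT : Differentiable ℝ (deriv γ) := (contDiff_one_iff_deriv.mp h1).1
  set b := a + π * r with hb
  set m := a + π * r / 2 with hm
  have hab : a ≤ b := by rw [hb]; nlinarith [pi_pos]
  -- Lipschitz bound for tangent
  have hlip : ∀ u v : ℝ, ‖deriv γ u - deriv γ v‖ ≤ (1 / r) * |u - v| := by
    intro u v
    have := (convex_univ : Convex ℝ (univ : Set ℝ)).norm_image_sub_le_of_norm_deriv_le
      (fun x _ => (hdT x)) (fun x _ => hcurv x) (mem_univ v) (mem_univ u)
    simpa [Real.norm_eq_abs] using this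
  -- pointwise cosine bound
  have hpt : ∀ u ∈ Icc a b, Real.cos ((u - m) / r) ≤ (inner ℝ (deriv γ m) (deriv γ u) : ℝ) := by
    intro u hu
    have hang : angle (deriv γ u) (deriv γ m) ≤ (1 / r) * |u - m| :=
      angle_le_lip hunit (by positivity) hlip u m
    have habs : |u - m| ≤ π * r / 2 := by
      have hu1 : a ≤ u := hu.1
      have hu2 : u ≤ a + π * r := by have := hu.2; rwa [hb] at this
      rw [abs_le, hm]; constructor <;> linarith
    have hangπ : (1 / r) * |u - m| ≤ π := by
      rw [div_mul_eq_mul_div, one_mul, div_le_iff₀ hr]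
      nlinarith [pi_pos]
    have hcos1 : Real.cos ((1 / r) * |u - m|) ≤ Real.cos (angle (deriv γ u) (deriv γ m)) :=
      Real.cos_le_cos_of_nonneg_of_le_pi (angle_nonneg _ _) hangπ hang
    have hcos2 : Real.cos (angle (deriv γ u) (deriv γ m)) = (inner ℝ (deriv γ u) (deriv γ m) : ℝ) := by
      rw [cos_angle, hunit, hunit]; norm_num
    have hcos3 : Real.cos ((1 / r) * |u - m|) = Real.cos ((u - m) / r) := by
      rw [div_mul_eq_mul_div, one_mul, ← Real.cos_abs ((u - m)/r), abs_div, abs_of_pos hr]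
    rw [real_inner_comm]
    calc Real.cos ((u - m) / r) = Real.cos ((1 / r) * |u - m|) := hcos3.symm
      _ ≤ _ := hcos1
      _ = _ := hcos2
  -- FTC
  have hTi : IntervalIntegrable (deriv γ) MeasureTheory.volume a b :=
    (h1.continuous).intervalIntegrable a b
  have hFTC : (∫ u in a..b, deriv γ u) = γ b - γ a :=
    integral_deriv_eq_sub (fun x _ => hdγ x) hTi
  have hinner : (inner ℝ (deriv γ m) (γ b - γ a) : ℝ)
      = ∫ u in a..b, (inner ℝ (deriv γ m) (deriv γ u) : ℝ) := by
    have h := ContinuousLinearMap.intervalIntegral_comp_comm (innerSL ℝ (deriv γ m)) hTi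
    simp only [innerSL_apply_apply] at h
    rw [← hFTC, ← h]
  have hcont : Continuous fun u => (inner ℝ (deriv γ m) (deriv γ u) : ℝ) :=
    Continuous.inner continuous_const h1.continuous
  have hmono : (∫ u in a..b, Real.cos ((u - m) / r))
      ≤ ∫ u in a..b, (inner ℝ (deriv γ m) (deriv γ u) : ℝ) := by
    apply integral_mono_on hab
    · exact Continuous.intervalIntegrable
        (Real.continuous_cos.comp ((continuous_id.sub continuous_const).div_const r)) a b
    · exact hcont.intervalIntegrable a b
    · exact hpt
  have hderivF : ∀ u : ℝ, HasDerivAt (fun u => r * Real.sin ((u - m) / r))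
      (Real.cos ((u - m) / r)) u := by
    intro u
    have hd1 : HasDerivAt (fun u : ℝ => (u - m) / r) (1 / r) u := by
      simpa using ((hasDerivAt_id u).sub_const m).div_const r
    have hd2 := (Real.hasDerivAt_sin ((u - m) / r)).comp u hd1
    have hd3 := hd2.const_mul r
    refine hd3.congr_deriv ?_
    rw [mul_comm, mul_assoc, one_div, inv_mul_cancel₀ hr.ne', mul_one]
  have hcalc : (∫ u in a..b, Real.cos ((u - m) / r)) = 2 * r := by
    rw [integral_eq_sub_of_hasDerivAt (fun u _ => hderivF u)
      (Continuous.intervalIntegrable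
        (Real.continuous_cos.comp ((continuous_id.sub continuous_const).div_const r)) a b)]
    have eam : (a - m) / r = -(π / 2) := by rw [hm]; field_simp; ring
    have ebm : (b - m) / r = π / 2 := by rw [hb, hm]; field_simp; ring
    rw [eam, ebm]
    simp [Real.sin_pi_div_two, Real.sin_neg]
    ring
  have hfin : 2 * r ≤ (inner ℝ (deriv γ m) (γ b - γ a) : ℝ) := by
    rw [hinner, ← hcalc]; exact hmono
  calc 2 * r ≤ (inner ℝ (deriv γ m) (γ b - γ a) : ℝ) := hfin
    _ ≤ ‖deriv γ m‖ * ‖γ b - γ a‖ := real_inner_le_norm _ _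
    _ = ‖γ b - γ a‖ := by rw [hunit, one_mul]

end Aux

/-- Let `γ` be a `C²` smooth knot of length `L` (unit-speed, period `L`, injective
on `[0,L)`) with thickness radius `R(K) = r`, where
`R(K) = min{MinRad(K), (1/2)·criticalSelfDistance(K)}`; here
`MinRad(K) = (sup of curvature)⁻¹` and the critical self-distance is the infimum
of `|γ s − γ t|` over pairs with `γ s ≠ γ t` whose chord is perpendicular to the
curve at at least one endpoint.  Then `arc(x,y) ≥ πr` implies `|x − y| ≥ 2r`. -/
theorem stmt_6 (L r : ℝ) (hL : 0 < L) (hr : 0 < r)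
    (γ : ℝ → EuclideanSpace ℝ (Fin 3))
    (hsmooth : ContDiff ℝ 2 γ)
    (hper : ∀ s, γ (s + L) = γ s)
    (hunit : ∀ s, ‖deriv γ s‖ = 1)
    (hinj : InjOn γ (Ico 0 L))
    (hthick :
      min ((⨆ s : ℝ, ‖deriv (deriv γ) s‖)⁻¹)
        ((sInf {d : ℝ | ∃ s t : ℝ, γ s ≠ γ t ∧
            (inner ℝ (deriv γ s) (γ s - γ t) = (0 : ℝ) ∨
             inner ℝ (deriv γ t) (γ s - γ t) = (0 : ℝ)) ∧
            d = dist (γ s) (γ t)}) / 2) = r)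
    (s t : ℝ) (hs : s ∈ Ico 0 L) (ht : t ∈ Ico 0 L)
    (harc : π * r ≤ min |s - t| (L - |s - t|)) :
    2 * r ≤ dist (γ s) (γ t) := by
  have hπ := Real.pi_pos
  have hπr : 0 < π * r := by positivity
  have harc1 : π * r ≤ |s - t| := le_trans harc (min_le_left _ _)
  have harc2 : π * r ≤ L - |s - t| := le_trans harc (min_le_right _ _)
  set S : Set ℝ := {d : ℝ | ∃ s t : ℝ, γ s ≠ γ t ∧
      (inner ℝ (deriv γ s) (γ s - γ t) = (0 : ℝ) ∨
       inner ℝ (deriv γ t) (γ s - γ t) = (0 : ℝ)) ∧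
      d = dist (γ s) (γ t)} with hS
  -- bound on curvature
  have hcurv : ∀ u, ‖deriv (deriv γ) u‖ ≤ 1 / r := by
    have hminA : r ≤ (⨆ u : ℝ, ‖deriv (deriv γ) u‖)⁻¹ := by
      have := min_le_left ((⨆ s : ℝ, ‖deriv (deriv γ) s‖)⁻¹) (sInf S / 2)
      rw [hthick] at this
      exact this
    by_cases hbdd : BddAbove (range fun u => ‖deriv (deriv γ) u‖)
    · intro u
      have hle : ‖deriv (deriv γ) u‖ ≤ ⨆ u : ℝ, ‖deriv (deriv γ) u‖ := le_ciSup hbdd u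
      set M := ⨆ u : ℝ, ‖deriv (deriv γ) u‖ with hM
      rcases le_or_gt M 0 with hM0 | hM0
      · have : (0:ℝ) ≤ 1 / r := by positivity
        linarith
      · have h1 : M * r ≤ M * M⁻¹ := mul_le_mul_of_nonneg_left hminA hM0.le
        rw [mul_inv_cancel₀ hM0.ne'] at h1
        calc ‖deriv (deriv γ) u‖ ≤ M := hle
          _ ≤ 1 / r := by rw [le_div_iff₀ hr]; exact h1
    · exfalso
      rw [Real.iSup_of_not_bddAbove hbdd, inv_zero] at hminA
      linarith
  -- bound on critical distance
  have hSinf : 2 * r ≤ sInf S := by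
    have := min_le_right ((⨆ s : ℝ, ‖deriv (deriv γ) s‖)⁻¹) (sInf S / 2)
    rw [hthick] at this
    linarith
  have hSbdd : BddBelow S := ⟨0, fun d hd => by
    obtain ⟨a, b, _, _, hd⟩ := hd
    rw [hd]; exact dist_nonneg⟩
  -- Schur bound in dist form
  have hschur : ∀ a : ℝ, 2 * r ≤ dist (γ a) (γ (a + π * r)) := by
    intro a
    rw [dist_comm, dist_eq_norm]
    exact schur γ hsmooth hunit hr hcurv a
  -- find representative u of t in the window
  obtain ⟨u, huI, hut⟩ : ∃ u, u ∈ Icc (s + π * r) (s + L - π * r) ∧ γ u = γ t := by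
    rcases le_or_gt s t with hst | hst
    · refine ⟨t, ⟨?_, ?_⟩, rfl⟩
      · have : |s - t| = t - s := by rw [abs_sub_comm, abs_of_nonneg (by linarith)]
        rw [this] at harc1; linarith
      · have : |s - t| = t - s := by rw [abs_sub_comm, abs_of_nonneg (by linarith)]
        rw [this] at harc2; linarith
    · refine ⟨t + L, ⟨?_, ?_⟩, hper t⟩
      · have : |s - t| = s - t := abs_of_pos (by linarith)
        rw [this] at harc2; linarith
      · have : |s - t| = s - t := abs_of_pos (by linarith)
        rw [this] at harc1; linarith
  -- minimize distance over the window
  have hcont : ContinuousOn (fun u => dist (γ s) (γ u)) (Icc (s + π * r) (s + L - π * r)) :=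
    (continuous_const.dist hsmooth.continuous).continuousOn
  obtain ⟨u₀, hu₀I, hmin⟩ := isCompact_Icc.exists_isMinOn ⟨u, huI⟩ hcont
  have hkey : 2 * r ≤ dist (γ s) (γ u₀) := by
    by_cases h1 : u₀ = s + π * r
    · rw [h1]; exact hschur s
    by_cases h2 : u₀ = s + L - π * r
    · rw [h2, ← hper s, dist_comm]
      have h := hschur (s + L - π * r)
      rwa [show s + L - π * r + π * r = s + L by ring] at h
    -- interior case
    · have hlt1 : s + π * r < u₀ := lt_of_le_of_ne hu₀I.1 (Ne.symm h1)
      have hlt2 : u₀ < s + L - π * r := lt_of_le_of_ne hu₀I.2 h2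
      have hloc : IsLocalMin (fun u => dist (γ s) (γ u)) u₀ :=
        hmin.isLocalMin (Icc_mem_nhds hlt1 hlt2)
      have hdγ : Differentiable ℝ γ := hsmooth.differentiable (by norm_num)
      -- squared distance has zero derivative
      have hg : IsLocalMin (fun u => (inner ℝ (γ u - γ s) (γ u - γ s) : ℝ)) u₀ := by
        have heq : ∀ u : ℝ, (inner ℝ (γ u - γ s) (γ u - γ s) : ℝ) = (dist (γ s) (γ u))^2 := by
          intro u
          rw [real_inner_self_eq_norm_sq, dist_comm, dist_eq_norm]
        refine hloc.mono (fun u h => ?_)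
        show (inner ℝ (γ u₀ - γ s) (γ u₀ - γ s) : ℝ) ≤ inner ℝ (γ u - γ s) (γ u - γ s)
        rw [heq u₀, heq u]
        exact pow_le_pow_left₀ dist_nonneg h 2
      have hder : HasDerivAt (fun u => (inner ℝ (γ u - γ s) (γ u - γ s) : ℝ))
          ((inner ℝ (γ u₀ - γ s) (deriv γ u₀) : ℝ) + (inner ℝ (deriv γ u₀) (γ u₀ - γ s) : ℝ)) u₀ := by
        have hc : HasDerivAt (fun u => γ u - γ s) (deriv γ u₀) u₀ :=
          ((hdγ u₀).hasDerivAt).sub_const (γ s)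
        exact hc.inner ℝ hc
      have hzero := hg.hasDerivAt_eq_zero hder
      have hperp : (inner ℝ (deriv γ u₀) (γ u₀ - γ s) : ℝ) = 0 := by
        rw [real_inner_comm] at hzero
        linarith [hzero]
      -- γ u₀ ≠ γ s
      have hne : γ u₀ ≠ γ s := by
        rcases lt_or_ge u₀ L with hu₀L | hu₀L
        · have hmem : u₀ ∈ Ico 0 L := ⟨by linarith [hs.1], hu₀L⟩
          exact fun h => (by linarith : s < u₀).ne' (hinj hmem hs h)
        · have hmem : u₀ - L ∈ Ico 0 L := ⟨by linarith, by linarith [hs.2, hπr]⟩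
          have hγ : γ u₀ = γ (u₀ - L) := by
            conv_lhs => rw [show u₀ = (u₀ - L) + L by ring]
            exact hper (u₀ - L)
          rw [hγ]
          exact fun h => (by linarith [hs.1] : u₀ - L < s).ne (hinj hmem hs h)
      have hmemS : dist (γ u₀) (γ s) ∈ S := ⟨u₀, s, hne, Or.inl hperp, rfl⟩
      calc 2 * r ≤ sInf S := hSinf
        _ ≤ dist (γ u₀) (γ s) := csInf_le hSbdd hmemS
        _ = dist (γ s) (γ u₀) := dist_comm _ _
  calc 2 * r ≤ dist (γ s) (γ u₀) := hkey
    _ ≤ dist (γ s) (γ u) := hmin huI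
    _ = dist (γ s) (γ t) := by rw [hut]
end

section
/- Define B(L) = L·(8/3 + 4P − 4/P + 8 ln P − 8 ln 2) + 4 where P = (3L/4 − 3π/2 + 1)^{1/3} − 1. Then for all L ≥ 104/3 + 2π, one has B(L) ≤ 4.57·L^{4/3}. -/
/-! Substitute `x = (3L/4 − 3π/2 + 1)^{1/3}`, so that `P = x − 1` and `L = 4x³/3 + (2π − 4/3)`
with `x ≥ 3`. Since `4/3 > 1.10064³`, the cube `(1.10064 (x + δ))³` stays below `L` for a small
shift `δ` paid for by the constant `2π − 4/3`, and then `L^{4/3} ≥ 1.10064 (x + δ) L`. The bracket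
`8/3 + 4P − 4/P + 8 ln P − 8 ln 2` is concave in `P`, so it lies below its tangent lines; tangents
at `P = 7`, `33/4` and `13` on the ranges `x ∈ [3, 8]`, `[8, 14]` and `[14, ∞)` reduce the claim
to linear inequalities in `x`, the term `4/L ≤ 3/x³` being bounded by its value at the left end. -/

open Real

lemma le_rpow_one_third_of_pow_three_le {u y : ℝ} (hu : 0 ≤ u) (h : u ^ 3 ≤ y) :
    u ≤ y ^ (1 / 3 : ℝ) :=
  calc u = (u ^ 3) ^ (1 / 3 : ℝ) := by
        rw [← rpow_natCast, ← rpow_mul hu]; norm_num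
    _ ≤ y ^ (1 / 3 : ℝ) := by gcongr

lemma rpow_one_third_pow_three {y : ℝ} (hy : 0 ≤ y) : (y ^ (1 / 3 : ℝ)) ^ 3 = y := by
  simpa using rpow_inv_natCast_pow hy three_ne_zero

lemma log_le_div_of_pow_le {y : ℝ} {M N : ℕ} (hy : 0 < y) (hN : N ≠ 0)
    (h : y ^ N ≤ (2.7182818283 : ℝ) ^ M) : log y ≤ M / N := by
  have he : (2.7182818283 : ℝ) ^ M ≤ exp (M / N) ^ N := by
    rw [← exp_nat_mul, mul_div_cancel₀ _ (Nat.cast_ne_zero.2 hN), ← exp_one_pow]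
    exact pow_le_pow_left₀ (by norm_num) exp_one_gt_d9.le M
  rw [log_le_iff_le_exp hy]
  exact le_of_pow_le_pow_left₀ hN (exp_pos _).le (h.trans he)

noncomputable def energyFactor (P : ℝ) : ℝ := 8 / 3 + 4 * P - 4 / P + 8 * log P - 8 * log 2

lemma neg_div_le_tangent {a P t : ℝ} (ha : 0 ≤ a) (hP : 0 < P) (ht : 0 < t) :
    -(a / P) ≤ -(a / t) + a / t ^ 2 * (P - t) := by
  have key : -(a / t) + a / t ^ 2 * (P - t) - -(a / P) = a * (P - t) ^ 2 / (P * t ^ 2) := by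
    field_simp; ring
  have : 0 ≤ a * (P - t) ^ 2 / (P * t ^ 2) := by positivity
  linarith

lemma log_le_tangent {P t : ℝ} (hP : 0 < P) (ht : 0 < t) :
    log P ≤ log t + (P - t) / t := by
  have h := log_le_sub_one_of_pos (div_pos hP ht)
  rw [log_div hP.ne' ht.ne'] at h
  have : P / t - 1 = (P - t) / t := by field_simp
  linarith

lemma energyFactor_le_tangent {P t : ℝ} (hP : 0 < P) (ht : 0 < t) :
    energyFactor P ≤ energyFactor t + (4 + 4 / t ^ 2 + 8 / t) * (P - t) := by
  have h₁ := neg_div_le_tangent (a := 4) (by norm_num) hP ht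
  have h₂ := log_le_tangent hP ht
  have : (4 + 4 / t ^ 2 + 8 / t) * (P - t) =
      4 * (P - t) + 4 / t ^ 2 * (P - t) + 8 * ((P - t) / t) := by ring
  unfold energyFactor
  linarith

lemma pow_three_le_of_mul_sq_le {x δ : ℝ} (hx : 0 ≤ x) (hδ : 0 ≤ δ)
    (h : 3 * δ * (x + δ) ^ 2 ≤ 37 / 10) :
    (1.10064 * (x + δ)) ^ 3 ≤ 4 / 3 * x ^ 3 + (2 * π - 4 / 3) := by
  have hcube : (x + δ) ^ 3 - x ^ 3 ≤ 3 * δ * (x + δ) ^ 2 := by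
    nlinarith [mul_nonneg hδ (mul_nonneg hx hδ), mul_nonneg hδ (mul_nonneg hδ hδ)]
  have hk : (1.10064 : ℝ) ^ 3 ≤ 4 / 3 := by norm_num
  have := pi_gt_d2
  rw [mul_pow]
  nlinarith [pow_nonneg (add_nonneg hx hδ) 3]

lemma four_div_le_three_div_pow_three {x : ℝ} (hx : 0 < x) :
    4 / (4 / 3 * x ^ 3 + (2 * π - 4 / 3)) ≤ 3 / x ^ 3 := by
  have := pi_gt_three
  have hx3 : 0 < x ^ 3 := by positivity
  rw [div_le_div_iff₀ (by linarith) hx3]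
  nlinarith

lemma mul_add_four_le_mul_rpow {L g c K : ℝ} (hL : 0 < L) (hc : 0 ≤ c) (hK : 0 ≤ K)
    (hcL : c ^ 3 ≤ L) (hg : g + 4 / L ≤ K * c) : L * g + 4 ≤ K * L ^ (4 / 3 : ℝ) := by
  have hcL' : c ≤ L ^ (1 / 3 : ℝ) := le_rpow_one_third_of_pow_three_le hc hcL
  calc L * g + 4 = L * (g + 4 / L) := by field_simp
    _ ≤ L * (K * L ^ (1 / 3 : ℝ)) := by gcongr; exact hg.trans (by gcongr)
    _ = K * L ^ (4 / 3 : ℝ) := by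
      rw [show (4 / 3 : ℝ) = 1 + 1 / 3 by norm_num, rpow_add hL, rpow_one]; ring

lemma energyFactor_add_le {x a t c : ℝ} (ha : 0 < a) (hax : a ≤ x) (ht : 0 < t) (hx : 1 < x)
    (hc : log t ≤ c) :
    energyFactor (x - 1) + 3 / x ^ 3 ≤
      8 / 3 + 4 * t - 4 / t + 8 * c - 8 * 0.6931471803 + (4 + 4 / t ^ 2 + 8 / t) * (x - 1 - t)
        + 3 / a ^ 3 := by
  have htan := energyFactor_le_tangent (sub_pos.2 hx) ht
  have hx3 : 3 / x ^ 3 ≤ 3 / a ^ 3 := by gcongr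
  have := log_two_gt_d9
  unfold energyFactor at htan ⊢
  linarith

lemma exists_pow_three_le_and_energyFactor_le {x : ℝ} (hx : 3 ≤ x) :
    ∃ c, 0 ≤ c ∧ c ^ 3 ≤ 4 / 3 * x ^ 3 + (2 * π - 4 / 3) ∧
      energyFactor (x - 1) + 3 / x ^ 3 ≤ 4.57 * c := by
  rcases le_total x 14 with hx14 | hx14
  · refine ⟨1.10064 * (x + 1 / 200), by positivity,
      pow_three_le_of_mul_sq_le (by linarith) (by norm_num) (by nlinarith), ?_⟩
    rcases le_total x 8 with hx8 | hx8
    · refine (energyFactor_add_le (a := 3) (t := 7) (by norm_num) hx (by norm_num) (by linarith)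
        (log_le_div_of_pow_le (M := 72) (N := 37) (by norm_num) (by norm_num) (by norm_num))).trans ?_
      norm_num; linarith
    · refine (energyFactor_add_le (t := 33 / 4) (by norm_num) hx8 (by norm_num) (by linarith)
        (log_le_div_of_pow_le (M := 19) (N := 9) (by norm_num) (by norm_num) (by norm_num))).trans ?_
      norm_num; linarith
  · refine ⟨1.10064 * x, by positivity,
      by simpa using pow_three_le_of_mul_sq_le (δ := 0) (by linarith) le_rfl (by norm_num), ?_⟩
    refine (energyFactor_add_le (t := 13) (by norm_num) hx14 (by norm_num) (by linarith)
      (log_le_div_of_pow_le (M := 13) (N := 5) (by norm_num) (by norm_num) (by norm_num))).trans ?_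
    norm_num; linarith

lemma mul_energyFactor_add_four_le {x : ℝ} (hx : 3 ≤ x) :
    (4 / 3 * x ^ 3 + (2 * π - 4 / 3)) * energyFactor (x - 1) + 4 ≤
      4.57 * (4 / 3 * x ^ 3 + (2 * π - 4 / 3)) ^ (4 / 3 : ℝ) := by
  obtain ⟨c, hc, hcL, hcg⟩ := exists_pow_three_le_and_energyFactor_le hx
  have hx0 : 0 < x := by linarith
  have hL : 0 < 4 / 3 * x ^ 3 + (2 * π - 4 / 3) := by
    have := pi_gt_three; have := pow_pos hx0 3; linarith
  exact mul_add_four_le_mul_rpow hL hc (by norm_num) hcL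
    (by linarith [four_div_le_three_div_pow_three hx0])

/-- With `P = (3L/4 − 3π/2 + 1)^{1/3} − 1` and
`B(L) = L·(8/3 + 4P − 4/P + 8 ln P − 8 ln 2) + 4`, for all `L ≥ 104/3 + 2π`
one has `B(L) ≤ 4.57·L^{4/3}`. -/
theorem stmt_16 (L : ℝ) (hL : 104 / 3 + 2 * π ≤ L) :
    (fun P : ℝ =>
        L * (8 / 3 + 4 * P - 4 / P + 8 * Real.log P - 8 * Real.log 2) + 4)
      ((3 * L / 4 - 3 * π / 2 + 1) ^ ((1 : ℝ) / 3) - 1)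
    ≤ 4.57 * L ^ ((4 : ℝ) / 3) := by
  set s := 3 * L / 4 - 3 * π / 2 + 1
  have hs : 3 ^ 3 ≤ s := by norm_num [s]; linarith
  have hx : 3 ≤ s ^ (1 / 3 : ℝ) := le_rpow_one_third_of_pow_three_le (by norm_num) hs
  have hLx : L = 4 / 3 * (s ^ (1 / 3 : ℝ)) ^ 3 + (2 * π - 4 / 3) := by
    rw [rpow_one_third_pow_three (by linarith)]; ring
  have key := mul_energyFactor_add_four_le hx
  rwa [← hLx] at key
end
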